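/- arXiv:2406.09882 — 3 statements merged into one kernel-verified Lean document; each statement's English description precedes it below -/
import Mathlib

section
/- Assume g: [0,∞) → [0,1] is nondecreasing and concave. Then for every λ ≥ 0, the top-k recommendation policy (namely the independent-sampling policy with ρ_{v|C} = 1 for v ∈ E*_C and ρ_{v|C} = 0 otherwise) maximizes the static objective f0 over all independent-sampling policies. -/
open Finset

noncomputable section

/-- Click-through rate of a recommendation policy `π` in the static model:
`p_CLK(π) = ∑_{C∈𝒞} p_C ∑_{E⊆C} p_{E|C} g(s_E)`. -/
def pCLK0 {ι : Type} [DecidableEq ι] (cand : Finset (Finset ι))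
    (pC : Finset ι → ℝ) (g : ℝ → ℝ) (s : ι → ℝ)
    (π : Finset ι → Finset ι → ℝ) : ℝ :=
  ∑ C ∈ cand, pC C * (∑ E ∈ C.powerset, π C E * g (∑ v ∈ E, s v))

/-- The static objective `f0(π) = p_CLK(π) − λ (1 − p_CLK(π)) s_H / s_Ω`. -/
def f0 {ι : Type} [Fintype ι] [DecidableEq ι] (cand : Finset (Finset ι))
    (pC : Finset ι → ℝ) (g : ℝ → ℝ) (s : ι → ℝ) (H : Finset ι) (lam : ℝ)
    (π : Finset ι → Finset ι → ℝ) : ℝ :=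
  pCLK0 cand pC g s π -
    lam * ((1 - pCLK0 cand pC g s π) * (∑ v ∈ H, s v) / (∑ v, s v))

/-- The independent-sampling policy induced by marginals `ρ_{v|C}`:
`p_{E|C} = ∏_{v∈E} ρ_{v|C} ∏_{v∈C\E} (1 − ρ_{v|C})`. -/
def prodPolicy {ι : Type} [DecidableEq ι] (ρ : Finset ι → ι → ℝ) :
    Finset ι → Finset ι → ℝ :=
  fun C E => (∏ v ∈ E, ρ C v) * ∏ v ∈ C \ E, (1 - ρ C v)

section Aux

variable {ι : Type} [DecidableEq ι]

/-- The product-policy weights sum to 1. -/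
lemma sum_prodPol (C : Finset ι) (r : ι → ℝ) :
    ∑ E ∈ C.powerset, (∏ v ∈ E, r v) * ∏ v ∈ C \ E, (1 - r v) = 1 := by
  have h := Finset.prod_add r (fun v => 1 - r v) C
  simp only [add_sub_cancel, Finset.prod_const_one] at h
  exact h.symm

/-- Marginal: sum over sets containing `u`. -/
lemma marginal_prodPol (C : Finset ι) (r : ι → ℝ) {u : ι} (hu : u ∈ C) :
    ∑ E ∈ C.powerset, (if u ∈ E then (∏ v ∈ E, r v) * ∏ v ∈ C \ E, (1 - r v) else 0)
      = r u := by
  have hC : C = insert u (C.erase u) := (Finset.insert_erase hu).symm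
  have hu' : u ∉ C.erase u := Finset.notMem_erase u C
  rw [hC, Finset.sum_powerset_insert hu']
  have h1 : ∀ F ∈ (C.erase u).powerset,
      (if u ∈ F then (∏ v ∈ F, r v) * ∏ v ∈ insert u (C.erase u) \ F, (1 - r v) else 0) = 0 := by
    intro F hF
    rw [Finset.mem_powerset] at hF
    have : u ∉ F := fun h => hu' (hF h)
    simp [this]
  rw [Finset.sum_congr rfl h1, Finset.sum_const_zero, zero_add]
  have h2 : ∀ F ∈ (C.erase u).powerset,
      (if u ∈ insert u F then (∏ v ∈ insert u F, r v) *
          ∏ v ∈ insert u (C.erase u) \ insert u F, (1 - r v) else 0)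
        = r u * ((∏ v ∈ F, r v) * ∏ v ∈ (C.erase u) \ F, (1 - r v)) := by
    intro F hF
    rw [Finset.mem_powerset] at hF
    have huF : u ∉ F := fun h => hu' (hF h)
    have hdiff : insert u (C.erase u) \ insert u F = (C.erase u) \ F := by
      ext x
      simp only [Finset.mem_sdiff, Finset.mem_insert]
      constructor
      · rintro ⟨hx1 | hx1, hx2⟩
        · exact absurd (Or.inl hx1) hx2
        · exact ⟨hx1, fun h => hx2 (Or.inr h)⟩
      · rintro ⟨hx1, hx2⟩
        exact ⟨Or.inr hx1, fun h => h.elim (fun he => hu' (he ▸ hx1)) hx2⟩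
    rw [if_pos (Finset.mem_insert_self u F), Finset.prod_insert huF, hdiff, mul_assoc]
  rw [Finset.sum_congr rfl h2, ← Finset.mul_sum, sum_prodPol, mul_one]

/-- Expected sum under the product policy equals `∑ ρ v * s v`. -/
lemma expect_prodPol (C : Finset ι) (r : ι → ℝ) (s : ι → ℝ) :
    ∑ E ∈ C.powerset, ((∏ v ∈ E, r v) * ∏ v ∈ C \ E, (1 - r v)) * (∑ v ∈ E, s v)
      = ∑ v ∈ C, r v * s v := by
  have key : ∀ E ∈ C.powerset,
      ((∏ v ∈ E, r v) * ∏ v ∈ C \ E, (1 - r v)) * (∑ v ∈ E, s v)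
      = ∑ u ∈ C, (if u ∈ E then (∏ v ∈ E, r v) * ∏ v ∈ C \ E, (1 - r v) else 0) * s u := by
    intro E hE
    rw [Finset.mem_powerset] at hE
    rw [Finset.mul_sum]
    rw [← Finset.sum_subset hE (fun x _ hx => by simp [hx])]
    refine Finset.sum_congr rfl fun u hu => ?_
    simp [hu]
  rw [Finset.sum_congr rfl key, Finset.sum_comm]
  refine Finset.sum_congr rfl fun u hu => ?_
  rw [← Finset.sum_mul, marginal_prodPol C r hu]

/-- Fractional relaxation bound: under `0 ≤ ρ ≤ 1` and `∑ρ ≤ k`, the fractional value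
is at most the best integral value. -/
lemma frac_le_top (C : Finset ι) (s : ι → ℝ) (hs : ∀ v, 0 < s v)
    (k : ℕ) (hk : 1 ≤ k) (Es : Finset ι) (hE1 : Es ⊆ C) (hE2 : Es.card ≤ k)
    (hE3 : ∀ E ⊆ C, E.card ≤ k → (∑ v ∈ E, s v) ≤ ∑ v ∈ Es, s v)
    (r : ι → ℝ) (hr0 : ∀ v ∈ C, 0 ≤ r v) (hr1 : ∀ v ∈ C, r v ≤ 1)
    (hrk : (∑ v ∈ C, r v) ≤ (k : ℝ)) :
    ∑ v ∈ C, r v * s v ≤ ∑ v ∈ Es, s v := by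
  by_cases hCE : C ⊆ Es
  · have hEq : Es = C := Finset.Subset.antisymm hE1 hCE
    subst hEq
    refine Finset.sum_le_sum fun v hv => ?_
    nlinarith [hs v, hr0 v hv, hr1 v hv]
  · obtain ⟨v0, hv0C, hv0E⟩ : ∃ v0, v0 ∈ C ∧ v0 ∉ Es := by
      rcases Finset.not_subset.mp hCE with ⟨v0, h1, h2⟩
      exact ⟨v0, h1, h2⟩
    have hcard : Es.card = k := by
      by_contra hne
      have hlt : Es.card < k := lt_of_le_of_ne hE2 hne
      have hsub : insert v0 Es ⊆ C := Finset.insert_subset hv0C hE1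
      have hcard' : (insert v0 Es).card ≤ k := by
        rw [Finset.card_insert_of_notMem hv0E]; omega
      have := hE3 _ hsub hcard'
      rw [Finset.sum_insert hv0E] at this
      nlinarith [hs v0]
    have hne : Es.Nonempty := Finset.card_pos.mp (by omega)
    obtain ⟨w, hwE, hwmin⟩ := Finset.exists_min_image Es s hne
    have hsmall : ∀ v ∈ C, v ∉ Es → s v ≤ s w := by
      intro v hvC hvE
      have hwE' : w ∉ Es.erase w := Finset.notMem_erase w Es
      have hvE' : v ∉ Es.erase w := fun h => hvE (Finset.mem_of_mem_erase h)
      have hsub : insert v (Es.erase w) ⊆ C := by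
        refine Finset.insert_subset hvC (fun x hx => hE1 (Finset.mem_of_mem_erase hx))
      have hcard' : (insert v (Es.erase w)).card ≤ k := by
        rw [Finset.card_insert_of_notMem hvE', Finset.card_erase_of_mem hwE]
        omega
      have h := hE3 _ hsub hcard'
      rw [Finset.sum_insert hvE'] at h
      have herase : ∑ x ∈ Es.erase w, s x = (∑ x ∈ Es, s x) - s w := by
        rw [Finset.sum_erase_eq_sub hwE]
      linarith [h, herase ▸ h]
    have hsplit : ∑ v ∈ C, r v * s v
        = (∑ v ∈ Es, r v * s v) + ∑ v ∈ C \ Es, r v * s v := by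
      rw [← Finset.sum_sdiff hE1]; ring
    have hsplit2 : ∑ v ∈ C, r v = (∑ v ∈ Es, r v) + ∑ v ∈ C \ Es, r v := by
      rw [← Finset.sum_sdiff hE1]; ring
    have hw0 : 0 < s w := hs w
    have h1 : ∑ v ∈ C \ Es, r v * s v ≤ (∑ v ∈ C \ Es, r v) * s w := by
      rw [Finset.sum_mul]
      refine Finset.sum_le_sum fun v hv => ?_
      rw [Finset.mem_sdiff] at hv
      have := hsmall v hv.1 hv.2
      nlinarith [hr0 v hv.1]
    have h2 : (∑ v ∈ C \ Es, r v) * s w ≤ ((k : ℝ) - ∑ v ∈ Es, r v) * s w := by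
      have : (∑ v ∈ C \ Es, r v) ≤ (k : ℝ) - ∑ v ∈ Es, r v := by linarith [hrk, hsplit2]
      nlinarith
    have h3 : ((k : ℝ) - ∑ v ∈ Es, r v) * s w ≤ ∑ v ∈ Es, (1 - r v) * s v := by
      have he : ((k : ℝ) - ∑ v ∈ Es, r v) * s w = ∑ v ∈ Es, (1 - r v) * s w := by
        rw [← Finset.sum_mul, Finset.sum_sub_distrib, Finset.sum_const, hcard,
          nsmul_eq_mul, mul_one]
      rw [he]
      refine Finset.sum_le_sum fun v hv => ?_
      have := hwmin v hv
      nlinarith [hr1 v (hE1 hv)]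
    have h4 : ∑ v ∈ Es, (1 - r v) * s v = (∑ v ∈ Es, s v) - ∑ v ∈ Es, r v * s v := by
      rw [← Finset.sum_sub_distrib]
      refine Finset.sum_congr rfl fun v hv => by ring
    linarith [hsplit, h1, h2, h3, h4]

/-- The top-`k` indicator policy is the point mass at `Es`. -/
lemma top_weight (C Es : Finset ι) (hE : Es ⊆ C) {E : Finset ι} (hEC : E ⊆ C) :
    (∏ v ∈ E, (if v ∈ Es then (1:ℝ) else 0)) *
      ∏ v ∈ C \ E, (1 - if v ∈ Es then (1:ℝ) else 0)
    = if E = Es then 1 else 0 := by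
  by_cases h : E = Es
  · rw [if_pos h, h]
    have p1 : (∏ v ∈ Es, (if v ∈ Es then (1:ℝ) else 0)) = 1 :=
      Finset.prod_eq_one fun v hv => if_pos hv
    have p2 : (∏ v ∈ C \ Es, (1 - if v ∈ Es then (1:ℝ) else 0)) = 1 :=
      Finset.prod_eq_one fun v hv => by
        rw [Finset.mem_sdiff] at hv; rw [if_neg hv.2]; ring
    rw [p1, p2, mul_one]
  · rw [if_neg h]
    by_cases h2 : E ⊆ Es
    · have : ∃ v ∈ Es, v ∉ E := by
        by_contra hcon; push_neg at hcon; exact h (Finset.Subset.antisymm h2 hcon)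
      obtain ⟨v, hvEs, hvE⟩ := this
      have hvC : v ∈ C \ E := Finset.mem_sdiff.mpr ⟨hE hvEs, hvE⟩
      have hz : (1 - if v ∈ Es then (1:ℝ) else 0) = 0 := by rw [if_pos hvEs]; ring
      rw [Finset.prod_eq_zero hvC hz, mul_zero]
    · obtain ⟨v, hvE, hvEs⟩ := Finset.not_subset.mp h2
      have hz : (if v ∈ Es then (1:ℝ) else 0) = 0 := if_neg hvEs
      rw [Finset.prod_eq_zero hvE hz, zero_mul]

end Aux

/-- If `g : [0,∞) → [0,1]` is nondecreasing and concave, then for every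
`λ ≥ 0` the top-`k` recommendation policy — namely the independent-sampling policy with
`ρ_{v|C} = 1` for `v ∈ E*_C` and `ρ_{v|C} = 0` otherwise, `E*_C` a highest-scoring subset
of `C` of cardinality at most `k` — maximizes the static objective `f0` over all
independent-sampling policies. -/
theorem stmt1 {ι : Type} [Fintype ι] [DecidableEq ι]
    (s : ι → ℝ) (hs : ∀ v, 0 < s v)
    (H : Finset ι)
    (cand : Finset (Finset ι)) (hcand : ∀ C ∈ cand, Disjoint C H)
    (pC : Finset ι → ℝ) (hpC0 : ∀ C ∈ cand, 0 ≤ pC C)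
    (hpC1 : (∑ C ∈ cand, pC C) = 1)
    (g : ℝ → ℝ) (hgmono : MonotoneOn g (Set.Ici (0:ℝ)))
    (hgconc : ConcaveOn ℝ (Set.Ici (0:ℝ)) g)
    (hg01 : ∀ x : ℝ, 0 ≤ x → g x ∈ Set.Icc (0:ℝ) 1)
    (lam : ℝ) (hlam : 0 ≤ lam)
    (k : ℕ) (hk : 1 ≤ k)
    (Estar : Finset ι → Finset ι)
    (hE1 : ∀ C ∈ cand, Estar C ⊆ C)
    (hE2 : ∀ C ∈ cand, (Estar C).card ≤ k)
    (hE3 : ∀ C ∈ cand, ∀ E ⊆ C, E.card ≤ k →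
      (∑ v ∈ E, s v) ≤ ∑ v ∈ Estar C, s v)
    (ρ : Finset ι → ι → ℝ)
    (hρ0 : ∀ C ∈ cand, ∀ v ∈ C, 0 ≤ ρ C v)
    (hρ1 : ∀ C ∈ cand, ∀ v ∈ C, ρ C v ≤ 1)
    (hρk : ∀ C ∈ cand, (∑ v ∈ C, ρ C v) ≤ (k : ℝ)) :
    f0 cand pC g s H lam (prodPolicy ρ) ≤
      f0 cand pC g s H lam
        (prodPolicy (fun C v => if v ∈ Estar C then 1 else 0)) := by
  -- Step 1: pCLK0 comparison
  have hP : pCLK0 cand pC g s (prodPolicy ρ) ≤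
      pCLK0 cand pC g s (prodPolicy (fun C v => if v ∈ Estar C then 1 else 0)) := by
    unfold pCLK0
    refine Finset.sum_le_sum fun C hC => ?_
    refine mul_le_mul_of_nonneg_left ?_ (hpC0 C hC)
    -- RHS inner sum equals g (s_{E*})
    have hRHS : (∑ E ∈ C.powerset,
        prodPolicy (fun C v => if v ∈ Estar C then 1 else 0) C E * g (∑ v ∈ E, s v))
        = g (∑ v ∈ Estar C, s v) := by
      have : ∀ E ∈ C.powerset,
          prodPolicy (fun C v => if v ∈ Estar C then 1 else 0) C E * g (∑ v ∈ E, s v)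
          = (if E = Estar C then 1 else 0) * g (∑ v ∈ E, s v) := by
        intro E hE
        rw [Finset.mem_powerset] at hE
        rw [prodPolicy, top_weight C (Estar C) (hE1 C hC) hE]
      rw [Finset.sum_congr rfl this]
      have h2 : ∀ E ∈ C.powerset, (if E = Estar C then (1:ℝ) else 0) * g (∑ v ∈ E, s v)
          = if E = Estar C then g (∑ v ∈ Estar C, s v) else 0 := by
        intro E _; by_cases h : E = Estar C <;> simp [h]
      rw [Finset.sum_congr rfl h2, Finset.sum_ite_eq' C.powerset (Estar C)
        (fun _ => g (∑ v ∈ Estar C, s v)),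
        if_pos (Finset.mem_powerset.mpr (hE1 C hC))]
    rw [hRHS]
    -- nonneg weights
    have hw0 : ∀ E ∈ C.powerset, 0 ≤ prodPolicy ρ C E := by
      intro E hE
      rw [Finset.mem_powerset] at hE
      refine mul_nonneg (Finset.prod_nonneg fun v hv => hρ0 C hC v (hE hv))
        (Finset.prod_nonneg fun v hv => ?_)
      rw [Finset.mem_sdiff] at hv
      linarith [hρ1 C hC v hv.1]
    have hw1 : ∑ E ∈ C.powerset, prodPolicy ρ C E = 1 := sum_prodPol C (ρ C)
    have hmem : ∀ E ∈ C.powerset, (∑ v ∈ E, s v) ∈ Set.Ici (0:ℝ) :=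
      fun E _ => Finset.sum_nonneg fun v _ => (hs v).le
    have hJensen := hgconc.le_map_sum hw0 hw1 hmem
    simp only [smul_eq_mul] at hJensen
    refine le_trans hJensen ?_
    have hExp : (∑ E ∈ C.powerset, prodPolicy ρ C E * (∑ v ∈ E, s v))
        = ∑ v ∈ C, ρ C v * s v := expect_prodPol C (ρ C) s
    rw [hExp]
    refine hgmono ?_ ?_ ?_
    · exact Finset.sum_nonneg fun v hv => mul_nonneg (hρ0 C hC v hv) (hs v).le
    · exact Finset.sum_nonneg fun v _ => (hs v).le
    · exact frac_le_top C s hs k hk (Estar C) (hE1 C hC) (hE2 C hC)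
        (hE3 C hC) (ρ C) (hρ0 C hC) (hρ1 C hC) (hρk C hC)
  -- Step 2: f0 is monotone in pCLK0
  have hA : (0:ℝ) ≤ ∑ v ∈ H, s v := Finset.sum_nonneg fun v _ => (hs v).le
  have hB : (0:ℝ) ≤ ∑ v, s v := Finset.sum_nonneg fun v _ => (hs v).le
  have hq : (0:ℝ) ≤ (∑ v ∈ H, s v) / (∑ v, s v) := div_nonneg hA hB
  unfold f0
  set P1 := pCLK0 cand pC g s (prodPolicy ρ)
  set P2 := pCLK0 cand pC g s (prodPolicy (fun C v => if v ∈ Estar C then 1 else 0))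
  rw [mul_div_assoc, mul_div_assoc]
  nlinarith [mul_nonneg (mul_nonneg hlam hq) (sub_nonneg.mpr hP)]

end
end

section
/- If user selections are governed by the MNL model under a static user profile u ∈ ℝ^d (scores s_v = exp(⟨v,u⟩) for item profiles v ∈ ℝ^d, and g(x) = x/(x+c) with c > 0), then for all λ ≥ 0 the top-k recommendation policy maximizes the static objective f0 both over all bounded-cardinality policies and over all independent-sampling policies. -/
open Finset
open scoped RealInnerProductSpace

noncomputable section

/-- MNL score of item `v` under user profile `u`: `s_v = exp(⟨v,u⟩)`. -/
def mnlScore {d : ℕ} {ι : Type} (V : ι → EuclideanSpace ℝ (Fin d))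
    (u : EuclideanSpace ℝ (Fin d)) (v : ι) : ℝ :=
  Real.exp ⟪V v, u⟫

/-! ### Auxiliary lemmas -/

/-- Monotonicity of `g(x) = x/(x+c)` on nonnegative reals. -/
lemma g_mono' {c x y : ℝ} (hc : 0 < c) (hx : 0 ≤ x) (hxy : x ≤ y) :
    x / (x + c) ≤ y / (y + c) := by
  have h1 : 0 < x + c := by linarith
  have h2 : 0 < y + c := by linarith
  rw [div_le_div_iff₀ h1 h2]; nlinarith

/-- Concavity of `g(x) = x/(x+c)` on nonnegative reals. -/
lemma g_concave' {c : ℝ} (hc : 0 < c) :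
    ConcaveOn ℝ (Set.Ici (0:ℝ)) (fun x => x / (x + c)) := by
  refine ⟨convex_Ici 0, ?_⟩
  intro x hx y hy a b ha hb hab
  simp only [smul_eq_mul]
  have hx0 : (0:ℝ) ≤ x := hx
  have hy0 : (0:ℝ) ≤ y := hy
  have h1 : 0 < x + c := by linarith
  have h2 : 0 < y + c := by linarith
  have h3 : 0 < a * x + b * y + c := by nlinarith
  rw [← mul_div_assoc, ← mul_div_assoc, div_add_div _ _ (ne_of_gt h1) (ne_of_gt h2),
    div_le_div_iff₀ (by positivity) h3]
  have hb' : b = 1 - a := by linarith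
  subst hb'
  nlinarith [mul_nonneg (mul_nonneg ha hb) (mul_nonneg hc.le (sq_nonneg (x - y)))]

/-- The independent-sampling weights sum to one. -/
lemma sum_prod_one {ι : Type} [DecidableEq ι] (ρ : ι → ℝ) (C : Finset ι) :
    ∑ E ∈ C.powerset, (∏ v ∈ E, ρ v) * ∏ v ∈ C \ E, (1 - ρ v) = 1 := by
  rw [← Finset.prod_add]; simp

/-- Linearity of expectation for independent sampling: the expected total weight equals
the sum of marginal weights. -/
lemma sum_prod_weighted {ι : Type} [DecidableEq ι] (ρ w : ι → ℝ) (C : Finset ι) :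
    ∑ E ∈ C.powerset, ((∏ v ∈ E, ρ v) * ∏ v ∈ C \ E, (1 - ρ v)) * (∑ v ∈ E, w v)
      = ∑ v ∈ C, ρ v * w v := by
  induction C using Finset.induction_on with
  | empty => simp
  | @insert a C ha ih =>
    rw [Finset.sum_powerset_insert ha]
    have hsd : ∀ E ∈ C.powerset, insert a C \ E = insert a (C \ E) := by
      intro E hE
      have haE : a ∉ E := fun h => ha ((Finset.mem_powerset.1 hE) h)
      exact Finset.insert_sdiff_of_notMem _ haE
    have hsd2 : ∀ E ∈ C.powerset, insert a C \ insert a E = C \ E := by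
      intro E hE
      ext v
      simp only [Finset.mem_sdiff, Finset.mem_insert]
      constructor
      · rintro ⟨h1 | h1, h2⟩
        · exact absurd (Or.inl h1) h2
        · exact ⟨h1, fun hv => h2 (Or.inr hv)⟩
      · rintro ⟨h1, h2⟩
        exact ⟨Or.inr h1, fun hv => hv.elim (fun he => ha (he ▸ h1)) h2⟩
    have h1 : ∑ E ∈ C.powerset,
        ((∏ v ∈ E, ρ v) * ∏ v ∈ insert a C \ E, (1 - ρ v)) * (∑ v ∈ E, w v)
        = (1 - ρ a) * ∑ E ∈ C.powerset,
            ((∏ v ∈ E, ρ v) * ∏ v ∈ C \ E, (1 - ρ v)) * (∑ v ∈ E, w v) := by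
      rw [Finset.mul_sum]
      refine Finset.sum_congr rfl fun E hE => ?_
      have haCE : a ∉ C \ E := fun h => ha (Finset.mem_sdiff.1 h).1
      rw [hsd E hE, Finset.prod_insert haCE]; ring
    have h2 : ∑ E ∈ C.powerset,
        ((∏ v ∈ insert a E, ρ v) * ∏ v ∈ insert a C \ insert a E, (1 - ρ v))
          * (∑ v ∈ insert a E, w v)
        = ρ a * (w a + ∑ v ∈ C, ρ v * w v) := by
      have : ∀ E ∈ C.powerset,
          ((∏ v ∈ insert a E, ρ v) * ∏ v ∈ insert a C \ insert a E, (1 - ρ v))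
            * (∑ v ∈ insert a E, w v)
          = ρ a * (((∏ v ∈ E, ρ v) * ∏ v ∈ C \ E, (1 - ρ v)) * w a
              + ((∏ v ∈ E, ρ v) * ∏ v ∈ C \ E, (1 - ρ v)) * (∑ v ∈ E, w v)) := by
        intro E hE
        have haE : a ∉ E := fun h => ha ((Finset.mem_powerset.1 hE) h)
        rw [hsd2 E hE, Finset.prod_insert haE, Finset.sum_insert haE]; ring
      rw [Finset.sum_congr rfl this, ← Finset.mul_sum, Finset.sum_add_distrib,
        ← Finset.sum_mul, sum_prod_one, ih, one_mul]
    rw [h1, h2, ih, Finset.sum_insert ha]; ring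

/-- LP bound: if marginals lie in `[0,1]` and sum to at most `k`, the weighted score is
bounded by the best score of a subset of cardinality at most `k`. -/
lemma lp_bound {ι : Type} [DecidableEq ι] (s : ι → ℝ) (hs : ∀ v, 0 ≤ s v) :
    ∀ (n : ℕ) (C : Finset ι), C.card = n → ∀ (k : ℕ) (ρ : ι → ℝ) (M : ℝ),
      (∀ v ∈ C, 0 ≤ ρ v) → (∀ v ∈ C, ρ v ≤ 1) → (∑ v ∈ C, ρ v) ≤ (k : ℝ) →
      (∀ E ⊆ C, E.card ≤ k → ∑ v ∈ E, s v ≤ M) →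
      ∑ v ∈ C, ρ v * s v ≤ M := by
  intro n
  induction n with
  | zero =>
    intro C hC k ρ M h0 h1 hk hM
    rw [Finset.card_eq_zero.1 hC]
    simpa using hM ∅ (Finset.empty_subset _) (by simp)
  | succ n IH =>
    intro C hC k ρ M h0 h1 hk hM
    have hMne : 0 ≤ M := by simpa using hM ∅ (Finset.empty_subset _) (by simp)
    by_cases hk0 : k = 0
    · subst hk0
      have hz : ∀ v ∈ C, ρ v = 0 := by
        have := (Finset.sum_eq_zero_iff_of_nonneg h0).1
          (le_antisymm (by simpa using hk) (Finset.sum_nonneg h0))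
        exact this
      calc ∑ v ∈ C, ρ v * s v = 0 := Finset.sum_eq_zero fun v hv => by rw [hz v hv, zero_mul]
        _ ≤ M := hMne
    · have hk1 : 1 ≤ k := Nat.one_le_iff_ne_zero.2 hk0
      have hCne : C.Nonempty := Finset.card_pos.1 (by omega)
      obtain ⟨a, haC, hamax⟩ := Finset.exists_max_image C s hCne
      set C' := C.erase a with hC'
      have hcard' : C'.card = n := by
        rw [hC', Finset.card_erase_of_mem haC, hC]; omega
      have hsub' : C' ⊆ C := Finset.erase_subset _ _
      have hsplit : ∑ v ∈ C, ρ v * s v = ρ a * s a + ∑ v ∈ C', ρ v * s v :=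
        (Finset.add_sum_erase C (fun v => ρ v * s v) haC).symm
      have hsplit2 : ∑ v ∈ C, ρ v = ρ a + ∑ v ∈ C', ρ v :=
        (Finset.add_sum_erase C ρ haC).symm
      have hM' : ∀ E ⊆ C', E.card ≤ k - 1 → ∑ v ∈ E, s v ≤ M - s a := by
        intro E hE hEc
        have haE : a ∉ E := fun h => (Finset.mem_erase.1 (hE h)).1 rfl
        have h1' : insert a E ⊆ C :=
          Finset.insert_subset haC (hE.trans hsub')
        have h2' : (insert a E).card ≤ k := by
          rw [Finset.card_insert_of_notMem haE]; omega
        have := hM (insert a E) h1' h2'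
        rw [Finset.sum_insert haE] at this
        linarith
      set S := ∑ v ∈ C', ρ v with hS
      have hS0 : 0 ≤ S := Finset.sum_nonneg fun v hv => h0 v (hsub' hv)
      by_cases hcase : S ≤ (k : ℝ) - 1
      · have hSk : S ≤ ((k - 1 : ℕ) : ℝ) := by
          rw [Nat.cast_sub hk1]; push_cast; linarith
        have hrec := IH C' hcard' (k - 1) ρ (M - s a)
          (fun v hv => h0 v (hsub' hv)) (fun v hv => h1 v (hsub' hv)) hSk hM'
        have hρa0 : 0 ≤ ρ a := h0 a haC
        have hρa1 : ρ a ≤ 1 := h1 a haC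
        have hsa : 0 ≤ s a := hs a
        rw [hsplit]
        nlinarith
      · push_neg at hcase
        have hSpos : 0 < S := by
          have : (0:ℝ) ≤ (k:ℝ) - 1 := by
            have : (1:ℝ) ≤ (k:ℝ) := by exact_mod_cast hk1
            linarith
          linarith
        set t := ((k : ℝ) - 1) / S with ht
        have ht0 : 0 ≤ t := by
          apply div_nonneg _ hS0
          have : (1:ℝ) ≤ (k:ℝ) := by exact_mod_cast hk1
          linarith
        have ht1 : t ≤ 1 := by
          rw [ht, div_le_one hSpos]; linarith
        have hsum' : ∑ v ∈ C', (t * ρ v) = ((k - 1 : ℕ) : ℝ) := by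
          rw [← Finset.mul_sum, ← hS, ht, div_mul_cancel₀ _ (ne_of_gt hSpos),
            Nat.cast_sub hk1]
          push_cast; ring
        have hrec := IH C' hcard' (k - 1) (fun v => t * ρ v) (M - s a)
          (fun v hv => mul_nonneg ht0 (h0 v (hsub' hv)))
          (fun v hv => mul_le_one₀ ht1 (h0 v (hsub' hv)) (h1 v (hsub' hv)))
          (le_of_eq hsum') hM'
        have hbound : ∑ v ∈ C', ρ v * s v
            ≤ (∑ v ∈ C', (t * ρ v) * s v) + (1 - t) * (S * s a) := by
          have : ∀ v ∈ C', ρ v * s v ≤ (t * ρ v) * s v + (1 - t) * (ρ v * s a) := by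
            intro v hv
            have := hamax v (hsub' hv)
            have h0v := h0 v (hsub' hv)
            nlinarith [mul_nonneg (mul_nonneg (sub_nonneg.2 ht1) h0v) (sub_nonneg.2 this)]
          calc ∑ v ∈ C', ρ v * s v
              ≤ ∑ v ∈ C', ((t * ρ v) * s v + (1 - t) * (ρ v * s a)) :=
                Finset.sum_le_sum this
            _ = (∑ v ∈ C', (t * ρ v) * s v) + (1 - t) * (S * s a) := by
                rw [Finset.sum_add_distrib, ← Finset.mul_sum, ← Finset.sum_mul]
        have hρa0 : 0 ≤ ρ a := h0 a haC
        have hρa1 : ρ a ≤ 1 := h1 a haC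
        have hsa : 0 ≤ s a := hs a
        have hbudget : ρ a + S ≤ (k : ℝ) := by rw [hsplit2] at hk; linarith
        have h1t : (1 - t) * S = S - ((k:ℝ) - 1) := by
          rw [ht]; field_simp
        rw [hsplit]
        nlinarith [hrec, hbound]

/-- Corollary 1: If user selections are governed by the MNL model under a
static user profile `u ∈ ℝ^d` (scores `s_v = exp(⟨v,u⟩)` for item profiles `v`, and
`g(x) = x/(x+c)` with `c > 0`), then for all `λ ≥ 0` the top-`k` policy maximizes the
static objective `f0` over all bounded-cardinality policies and over all
independent-sampling policies. -/
theorem stmt2 {d : ℕ} {ι : Type} [Fintype ι] [DecidableEq ι]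
    (V : ι → EuclideanSpace ℝ (Fin d)) (hV : Function.Injective V)
    (u : EuclideanSpace ℝ (Fin d))
    (c : ℝ) (hc : 0 < c)
    (H : Finset ι)
    (cand : Finset (Finset ι)) (hcand : ∀ C ∈ cand, Disjoint C H)
    (pC : Finset ι → ℝ) (hpC0 : ∀ C ∈ cand, 0 ≤ pC C)
    (hpC1 : (∑ C ∈ cand, pC C) = 1)
    (lam : ℝ) (hlam : 0 ≤ lam)
    (k : ℕ) (hk : 1 ≤ k)
    (Estar : Finset ι → Finset ι)
    (hE1 : ∀ C ∈ cand, Estar C ⊆ C)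
    (hE2 : ∀ C ∈ cand, (Estar C).card ≤ k)
    (hE3 : ∀ C ∈ cand, ∀ E ⊆ C, E.card ≤ k →
      (∑ v ∈ E, mnlScore V u v) ≤ ∑ v ∈ Estar C, mnlScore V u v) :
    (∀ π : Finset ι → Finset ι → ℝ,
      (∀ C ∈ cand, ∀ E ∈ C.powerset, 0 ≤ π C E) →
      (∀ C ∈ cand, (∑ E ∈ C.powerset, π C E) = 1) →
      (∀ C ∈ cand, ∀ E ∈ C.powerset, k < E.card → π C E = 0) →
      f0 cand pC (fun x => x / (x + c)) (mnlScore V u) H lam π ≤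
        f0 cand pC (fun x => x / (x + c)) (mnlScore V u) H lam
          (fun C E => if E = Estar C then 1 else 0)) ∧
    (∀ ρ : Finset ι → ι → ℝ,
      (∀ C ∈ cand, ∀ v ∈ C, 0 ≤ ρ C v) →
      (∀ C ∈ cand, ∀ v ∈ C, ρ C v ≤ 1) →
      (∀ C ∈ cand, (∑ v ∈ C, ρ C v) ≤ (k : ℝ)) →
      f0 cand pC (fun x => x / (x + c)) (mnlScore V u) H lam (prodPolicy ρ) ≤
        f0 cand pC (fun x => x / (x + c)) (mnlScore V u) H lam
          (prodPolicy (fun C v => if v ∈ Estar C then 1 else 0))) := by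
  set s : ι → ℝ := mnlScore V u with hsdef
  have hs : ∀ v, 0 < s v := fun v => Real.exp_pos _
  set g : ℝ → ℝ := fun x => x / (x + c) with hgdef
  -- monotonicity of f0 in pCLK0
  have hf0mono : ∀ π π' : Finset ι → Finset ι → ℝ,
      pCLK0 cand pC g s π ≤ pCLK0 cand pC g s π' →
      f0 cand pC g s H lam π ≤ f0 cand pC g s H lam π' := by
    intro π π' hp
    unfold f0
    have hr : 0 ≤ (∑ v ∈ H, s v) / (∑ v, s v) :=
      div_nonneg (Finset.sum_nonneg fun v _ => (hs v).le)
        (Finset.sum_nonneg fun v _ => (hs v).le)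
    rw [mul_div_assoc, mul_div_assoc]
    nlinarith [mul_nonneg (mul_nonneg hlam hr) (sub_nonneg.2 hp)]
  -- value of the top-k deterministic policy
  have htop : pCLK0 cand pC g s (fun C E => if E = Estar C then 1 else 0)
      = ∑ C ∈ cand, pC C * g (∑ v ∈ Estar C, s v) := by
    unfold pCLK0
    refine Finset.sum_congr rfl fun C hC => ?_
    congr 1
    rw [Finset.sum_eq_single (Estar C)]
    · simp
    · intro E hE hne; simp [hne]
    · intro h; exact absurd (Finset.mem_powerset.2 (hE1 C hC)) h
  -- the indicator product policy coincides with the deterministic top-k policy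
  have hindeq : ∀ C ∈ cand, ∀ E ∈ C.powerset,
      prodPolicy (fun C v => if v ∈ Estar C then (1:ℝ) else 0) C E
        = if E = Estar C then (1:ℝ) else 0 := by
    intro C hC E hE
    have hEC : E ⊆ C := Finset.mem_powerset.1 hE
    show (∏ v ∈ E, if v ∈ Estar C then (1:ℝ) else 0)
        * (∏ v ∈ C \ E, (1 - if v ∈ Estar C then (1:ℝ) else 0))
      = if E = Estar C then (1:ℝ) else 0
    by_cases h : E = Estar C
    · subst h
      rw [if_pos rfl,
        Finset.prod_eq_one (fun v hv => if_pos hv),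
        Finset.prod_eq_one (fun v hv => by
          rw [if_neg (Finset.mem_sdiff.1 hv).2]; norm_num),
        one_mul]
    · rw [if_neg h]
      by_cases hsub : E ⊆ Estar C
      · obtain ⟨v, hv1, hv2⟩ := Finset.exists_of_ssubset (hsub.ssubset_of_ne h)
        have hvC : v ∈ C \ E := Finset.mem_sdiff.2 ⟨hE1 C hC hv1, hv2⟩
        rw [Finset.prod_eq_zero hvC (by rw [if_pos hv1]; norm_num), mul_zero]
      · obtain ⟨v, hv1, hv2⟩ := Finset.not_subset.1 hsub
        rw [Finset.prod_eq_zero hv1 (if_neg hv2 : (if v ∈ Estar C then (1:ℝ) else 0) = 0), zero_mul]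
  have htop2 : pCLK0 cand pC g s (prodPolicy (fun C v => if v ∈ Estar C then 1 else 0))
      = ∑ C ∈ cand, pC C * g (∑ v ∈ Estar C, s v) := by
    rw [← htop]
    unfold pCLK0
    refine Finset.sum_congr rfl fun C hC => ?_
    congr 1
    exact Finset.sum_congr rfl fun E hE => by rw [hindeq C hC E hE]
  constructor
  · -- bounded-cardinality policies
    intro π h0 h1 hcap
    apply hf0mono
    rw [htop]
    unfold pCLK0
    refine Finset.sum_le_sum fun C hC => ?_
    refine mul_le_mul_of_nonneg_left ?_ (hpC0 C hC)
    calc ∑ E ∈ C.powerset, π C E * g (∑ v ∈ E, s v)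
        ≤ ∑ E ∈ C.powerset, π C E * g (∑ v ∈ Estar C, s v) := by
          refine Finset.sum_le_sum fun E hE => ?_
          by_cases hcard : E.card ≤ k
          · refine mul_le_mul_of_nonneg_left ?_ (h0 C hC E hE)
            exact g_mono' hc (Finset.sum_nonneg fun v _ => (hs v).le)
              (hE3 C hC E (Finset.mem_powerset.1 hE) hcard)
          · rw [hcap C hC E hE (by omega), zero_mul, zero_mul]
      _ = g (∑ v ∈ Estar C, s v) := by
          rw [← Finset.sum_mul, h1 C hC, one_mul]
  · -- independent-sampling policies
    intro ρ h0 h1 hcap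
    apply hf0mono
    rw [htop2]
    unfold pCLK0
    refine Finset.sum_le_sum fun C hC => ?_
    refine mul_le_mul_of_nonneg_left ?_ (hpC0 C hC)
    have hw0 : ∀ E ∈ C.powerset, 0 ≤ prodPolicy ρ C E := by
      intro E hE
      have hEC : E ⊆ C := Finset.mem_powerset.1 hE
      exact mul_nonneg
        (Finset.prod_nonneg fun v hv => h0 C hC v (hEC hv))
        (Finset.prod_nonneg fun v hv => by
          have := h1 C hC v (Finset.mem_sdiff.1 hv).1; linarith)
    have hw1 : ∑ E ∈ C.powerset, prodPolicy ρ C E = 1 := sum_prod_one (ρ C) C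
    have hmem : ∀ E ∈ C.powerset, (∑ v ∈ E, s v) ∈ Set.Ici (0:ℝ) :=
      fun E _ => Finset.sum_nonneg fun v _ => (hs v).le
    have hJ := (g_concave' hc).le_map_sum hw0 hw1 hmem
    simp only [smul_eq_mul] at hJ
    calc ∑ E ∈ C.powerset, prodPolicy ρ C E * g (∑ v ∈ E, s v)
        ≤ g (∑ E ∈ C.powerset, prodPolicy ρ C E * (∑ v ∈ E, s v)) := hJ
      _ = g (∑ v ∈ C, ρ C v * s v) := by
          rw [show ∑ E ∈ C.powerset, prodPolicy ρ C E * (∑ v ∈ E, s v)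
            = ∑ v ∈ C, ρ C v * s v from sum_prod_weighted (ρ C) s C]
      _ ≤ g (∑ v ∈ Estar C, s v) := by
          refine g_mono' hc (Finset.sum_nonneg fun v hv =>
            mul_nonneg (h0 C hC v hv) (hs v).le) ?_
          exact lp_bound s (fun v => (hs v).le) C.card C rfl k (ρ C)
            (∑ v ∈ Estar C, s v) (h0 C hC) (h1 C hC) (hcap C hC) (hE3 C hC)

end
end

section
/- Let C be a finite set, s_v ≥ 0 for v ∈ C with s_A = Σ_{v∈A} s_v, let g: [0,∞) → ℝ be concave and nondecreasing, and let k be a positive integer with k ≤ |C|. Define the multilinear extension F(ρ) = Σ_{E⊆C} g(s_E) · Π_{v∈E} ρ_v · Π_{v∈C\E} (1 − ρ_v) for ρ ∈ [0,1]^C. Then F(ρ) ≤ g(s_{E*}) for every ρ ∈ [0,1]^C with Σ_{v∈C} ρ_v ≤ k, where E* is any set of k items of C with the largest scores; equivalently, the indicator vector of E* maximizes F over {ρ ∈ [0,1]^C : Σ_{v∈C} ρ_v ≤ k}. -/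
open Finset

lemma stmt11_weight {ι : Type} [DecidableEq ι] (C : Finset ι) (ρ : ι → ℝ) :
    ∑ E ∈ C.powerset, (∏ v ∈ E, ρ v) * ∏ v ∈ C \ E, (1 - ρ v) = 1 := by
  rw [← Finset.prod_add]
  simp

lemma stmt11_mean {ι : Type} [DecidableEq ι] (s ρ : ι → ℝ) (C : Finset ι) :
    ∑ E ∈ C.powerset, ((∏ v ∈ E, ρ v) * ∏ v ∈ C \ E, (1 - ρ v)) * (∑ v ∈ E, s v)
      = ∑ v ∈ C, ρ v * s v := by
  classical
  induction C using Finset.induction_on with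
  | empty => simp
  | @insert a C ha ih =>
    rw [Finset.powerset_insert, Finset.sum_union]
    · rw [Finset.sum_image (by
        intro x hx y hy hxy
        have hx' := Finset.mem_powerset.mp hx
        have hy' := Finset.mem_powerset.mp hy
        have : x = Finset.erase (insert a x) a := by
          rw [Finset.erase_insert (fun h => ha (hx' h))]
        rw [this, hxy, Finset.erase_insert (fun h => ha (hy' h))])]
      have h1 : ∀ E ∈ C.powerset,
          ((∏ v ∈ E, ρ v) * ∏ v ∈ insert a C \ E, (1 - ρ v)) * (∑ v ∈ E, s v)
          = (1 - ρ a) * (((∏ v ∈ E, ρ v) * ∏ v ∈ C \ E, (1 - ρ v)) * (∑ v ∈ E, s v)) := by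
        intro E hE
        have hE' := Finset.mem_powerset.mp hE
        have haE : a ∉ E := fun h => ha (hE' h)
        have : insert a C \ E = insert a (C \ E) := by
          rw [Finset.insert_sdiff_of_notMem _ haE]
        rw [this, Finset.prod_insert (by simp [ha])]
        ring
      have h2 : ∀ E ∈ C.powerset,
          ((∏ v ∈ insert a E, ρ v) * ∏ v ∈ insert a C \ insert a E, (1 - ρ v))
            * (∑ v ∈ insert a E, s v)
          = ρ a * (((∏ v ∈ E, ρ v) * ∏ v ∈ C \ E, (1 - ρ v)) * (s a + ∑ v ∈ E, s v)) := by
        intro E hE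
        have hE' := Finset.mem_powerset.mp hE
        have haE : a ∉ E := fun h => ha (hE' h)
        have hd : insert a C \ insert a E = C \ E := by
          ext x
          simp only [Finset.mem_sdiff, Finset.mem_insert, not_or]
          constructor
          · rintro ⟨hx | hx, hxa, hxE⟩
            · exact absurd hx hxa
            · exact ⟨hx, hxE⟩
          · rintro ⟨hx, hxE⟩
            exact ⟨Or.inr hx, fun h => ha (h ▸ hx), hxE⟩
        rw [hd, Finset.prod_insert haE, Finset.sum_insert haE]
        ring
      rw [Finset.sum_congr rfl h1, Finset.sum_congr rfl h2, ← Finset.mul_sum, ← Finset.mul_sum,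
        ih]
      have hsplit : ∑ E ∈ C.powerset,
          ((∏ v ∈ E, ρ v) * ∏ v ∈ C \ E, (1 - ρ v)) * (s a + ∑ v ∈ E, s v)
          = s a * (∑ E ∈ C.powerset, (∏ v ∈ E, ρ v) * ∏ v ∈ C \ E, (1 - ρ v))
            + ∑ E ∈ C.powerset, ((∏ v ∈ E, ρ v) * ∏ v ∈ C \ E, (1 - ρ v)) * (∑ v ∈ E, s v) := by
        rw [Finset.mul_sum, ← Finset.sum_add_distrib]
        exact Finset.sum_congr rfl fun E _ => by ring
      rw [hsplit, stmt11_weight, ih, Finset.sum_insert ha]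
      ring
    · rw [Finset.disjoint_left]
      intro E hE hE'
      obtain ⟨F, hF, rfl⟩ := Finset.mem_image.mp hE'
      exact ha (Finset.mem_powerset.mp hE (Finset.mem_insert_self a F))

/-- the multilinear extension
`F(ρ) = ∑_{E⊆C} g(s_E) ∏_{v∈E} ρ_v ∏_{v∈C\E} (1−ρ_v)` of the monotone submodular function
`E ↦ g(s_E)` (with `g` concave and nondecreasing on `[0,∞)` and nonnegative scores `s`)
is at most `g(s_{E*})` for every `ρ ∈ [0,1]^C` with `∑_{v∈C} ρ_v ≤ k`, where `E*` is a
top-`k` set of `C`. -/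
theorem stmt11 {ι : Type} [DecidableEq ι] (C : Finset ι) (s : ι → ℝ)
    (hs : ∀ v ∈ C, 0 ≤ s v)
    (g : ℝ → ℝ) (hconc : ConcaveOn ℝ (Set.Ici (0:ℝ)) g)
    (hmono : MonotoneOn g (Set.Ici (0:ℝ)))
    (k : ℕ) (hk1 : 1 ≤ k) (hk : k ≤ C.card)
    (Estar : Finset ι) (hEsub : Estar ⊆ C) (hEcard : Estar.card = k)
    (htop : ∀ v ∈ Estar, ∀ w ∈ C \ Estar, s w ≤ s v)
    (ρ : ι → ℝ) (hρ0 : ∀ v ∈ C, 0 ≤ ρ v) (hρ1 : ∀ v ∈ C, ρ v ≤ 1)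
    (hρk : (∑ v ∈ C, ρ v) ≤ (k : ℝ)) :
    (∑ E ∈ C.powerset,
        g (∑ v ∈ E, s v) * (∏ v ∈ E, ρ v) * (∏ v ∈ C \ E, (1 - ρ v)))
      ≤ g (∑ v ∈ Estar, s v) := by
  classical
  set w : Finset ι → ℝ := fun E => (∏ v ∈ E, ρ v) * ∏ v ∈ C \ E, (1 - ρ v) with hw
  have hw0 : ∀ E ∈ C.powerset, 0 ≤ w E := by
    intro E hE
    have hE' := Finset.mem_powerset.mp hE
    apply mul_nonneg
    · exact Finset.prod_nonneg fun v hv => hρ0 v (hE' hv)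
    · exact Finset.prod_nonneg fun v hv => by
        have := hρ1 v (Finset.mem_sdiff.mp hv).1
        linarith
  have hw1 : ∑ E ∈ C.powerset, w E = 1 := stmt11_weight C ρ
  have hmem : ∀ E ∈ C.powerset, (∑ v ∈ E, s v) ∈ Set.Ici (0:ℝ) := by
    intro E hE
    exact Finset.sum_nonneg fun v hv => hs v (Finset.mem_powerset.mp hE hv)
  have jensen := hconc.le_map_sum hw0 hw1 hmem
  simp only [smul_eq_mul] at jensen
  have heq : (∑ E ∈ C.powerset,
        g (∑ v ∈ E, s v) * (∏ v ∈ E, ρ v) * (∏ v ∈ C \ E, (1 - ρ v)))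
      = ∑ E ∈ C.powerset, w E * g (∑ v ∈ E, s v) :=
    Finset.sum_congr rfl fun E _ => by rw [hw]; ring
  rw [heq]
  refine le_trans jensen ?_
  -- now g (∑ w E • sE) = g (∑ ρ v * s v) ≤ g (∑_{Estar} s v)
  have hmean : ∑ E ∈ C.powerset, w E * (∑ v ∈ E, s v) = ∑ v ∈ C, ρ v * s v :=
    stmt11_mean s ρ C
  have hmean0 : (0:ℝ) ≤ ∑ v ∈ C, ρ v * s v :=
    Finset.sum_nonneg fun v hv => mul_nonneg (hρ0 v hv) (hs v hv)
  have hEs0 : (0:ℝ) ≤ ∑ v ∈ Estar, s v :=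
    Finset.sum_nonneg fun v hv => hs v (hEsub hv)
  rw [hmean]
  apply hmono hmean0 hEs0
  -- fractional knapsack bound
  obtain ⟨b, hb, hbmin⟩ := Finset.exists_min_image Estar s
    (Finset.card_pos.mp (by rw [hEcard]; exact hk1))
  have hm0 : 0 ≤ s b := hs b (hEsub hb)
  have hsplitC : ∑ v ∈ C, ρ v * s v
      = ∑ v ∈ Estar, ρ v * s v + ∑ v ∈ C \ Estar, ρ v * s v := by
    rw [← Finset.sum_sdiff hEsub]; ring
  have h1 : ∑ v ∈ C \ Estar, ρ v * s v ≤ s b * ∑ v ∈ C \ Estar, ρ v := by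
    rw [Finset.mul_sum]
    apply Finset.sum_le_sum
    intro v hv
    have hvC := (Finset.mem_sdiff.mp hv).1
    calc ρ v * s v ≤ ρ v * s b := by
          apply mul_le_mul_of_nonneg_left (htop b hb v hv) (hρ0 v hvC)
      _ = s b * ρ v := by ring
  have h2 : ∑ v ∈ C \ Estar, ρ v ≤ (k : ℝ) - ∑ v ∈ Estar, ρ v := by
    have : ∑ v ∈ C, ρ v = ∑ v ∈ Estar, ρ v + ∑ v ∈ C \ Estar, ρ v := by
      rw [← Finset.sum_sdiff hEsub]; ring
    linarith
  have h3 : s b * ∑ v ∈ C \ Estar, ρ v ≤ s b * ((k:ℝ) - ∑ v ∈ Estar, ρ v) :=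
    mul_le_mul_of_nonneg_left h2 hm0
  have hkE : (k : ℝ) = ∑ _v ∈ Estar, (1:ℝ) := by
    rw [Finset.sum_const, ← hEcard]; simp
  have h4 : ∑ v ∈ Estar, ρ v * s v + s b * ((k:ℝ) - ∑ v ∈ Estar, ρ v)
      ≤ ∑ v ∈ Estar, s v := by
    rw [hkE]
    have : ∑ v ∈ Estar, ρ v * s v + s b * (∑ _v ∈ Estar, (1:ℝ) - ∑ v ∈ Estar, ρ v)
        = ∑ v ∈ Estar, (ρ v * s v + s b * (1 - ρ v)) := by
      rw [Finset.sum_add_distrib, ← Finset.mul_sum, ← Finset.sum_sub_distrib]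
    rw [this]
    apply Finset.sum_le_sum
    intro v hv
    have hρv1 : ρ v ≤ 1 := hρ1 v (hEsub hv)
    have hρv0 : 0 ≤ ρ v := hρ0 v (hEsub hv)
    have hbv : s b ≤ s v := hbmin v hv
    nlinarith
  linarith
end
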